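/- For the Morley form of f1, f2 of degrees d1, d2 with δ = d1 + d2 − 2, the component of bidegree (δ,0) equals sylv_{(0,0)}(f1,f2) ⊗ 1 and the component of bidegree (0,δ) equals 1 ⊗ sylv_{(0,0)}(f1,f2) in B ⊗_A B. -/

import Mathlib

/-!
Both components come from specialising a Morley decomposition
`f_i(X) - f_i(Y) = (X₁ - Y₁) h_{i1} + (X₂ - Y₂) h_{i2}`. The component of `X`-weight `0` is the
substitution `X = 0`, which turns it into a decomposition `f_i(Y) = Y₁ h̄_{i1} + Y₂ h̄_{i2}`; two
decompositions of `f₁, f₂` along `Y₁, Y₂` have determinants congruent modulo `(f₁, f₂)`, because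
every syzygy of `(Y₁, Y₂)` is a multiple of the Koszul syzygy.

For the component of `X`-weight `δ`, the same Koszul argument for `(X₁ - Y₁, X₂ - Y₂)` first
replaces `h` by its homogeneous components of degrees `d_i - 1`, changing `det h` by an element of
`(f_i(X) - f_i(Y))`; since the ideal `(f_i(X), f_i(Y))` is bihomogeneous, the components of that
error stay in it. The new determinant is homogeneous of degree `δ`, so its component of `X`-weight
`δ` is its component of `Y`-weight `0`, and the argument above applies with `X` and `Y` exchanged.
The degrees `d_i` are positive because `f_i ≠ 0` has no constant term.
-/

open MvPolynomial

section KoszulPair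

variable {R : Type*}

/-- Every syzygy of `t, s` is a multiple of the Koszul syzygy `(s, -t)`. -/
def IsKoszulPair [Mul R] (t s : R) : Prop :=
  ∀ p q : R, t * p = s * q → ∃ w, p = s * w ∧ q = t * w

theorem IsKoszulPair.map {S : Type*} [Mul R] [Mul S] (e : R ≃* S) {t s : R}
    (h : IsKoszulPair t s) : IsKoszulPair (e t) (e s) := by
  intro p q hpq
  obtain ⟨w, hp, hq⟩ := h (e.symm p) (e.symm q) (by simpa using congrArg e.symm hpq)
  exact ⟨e w, by simpa using congrArg e hp, by simpa using congrArg e hq⟩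

theorem IsKoszulPair.det_sub_det_mem_span [CommRing R]
    {t s D₁ D₂ p₁₁ p₁₂ p₂₁ p₂₂ q₁₁ q₁₂ q₂₁ q₂₂ : R} (hts : IsKoszulPair t s)
    (hp₁ : D₁ = t * p₁₁ + s * p₁₂) (hq₁ : D₁ = t * q₁₁ + s * q₁₂)
    (hp₂ : D₂ = t * p₂₁ + s * p₂₂) (hq₂ : D₂ = t * q₂₁ + s * q₂₂) :
    p₁₁ * p₂₂ - p₁₂ * p₂₁ - (q₁₁ * q₂₂ - q₁₂ * q₂₁) ∈ Ideal.span {D₁, D₂} := by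
  obtain ⟨w₁, hw₁, hw₁'⟩ := hts (p₁₁ - q₁₁) (q₁₂ - p₁₂) (by linear_combination hq₁ - hp₁)
  obtain ⟨w₂, hw₂, hw₂'⟩ := hts (p₂₁ - q₂₁) (q₂₂ - p₂₂) (by linear_combination hq₂ - hp₂)
  obtain rfl : p₁₁ = q₁₁ + s * w₁ := by linear_combination hw₁
  obtain rfl : p₁₂ = q₁₂ - t * w₁ := by linear_combination -hw₁'
  obtain rfl : p₂₁ = q₂₁ + s * w₂ := by linear_combination hw₂
  obtain rfl : p₂₂ = q₂₂ - t * w₂ := by linear_combination -hw₂'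
  exact Ideal.mem_span_pair.mpr ⟨-w₂, w₁, by linear_combination -w₂ * hq₁ + w₁ * hq₂⟩

end KoszulPair

namespace MvPolynomial

section CommSemiring

variable {σ τ R M : Type*} [CommSemiring R]

theorem isKoszulPair_X {i j : σ} (hij : i ≠ j) : IsKoszulPair (X i : MvPolynomial σ R) (X j) := by
  classical
  intro p q hpq
  have hdvd : X j ∣ p := by
    rw [X_dvd_iff_modMonomial_eq_zero]
    ext d
    by_cases hle : Finsupp.single j 1 ≤ d
    · rw [coeff_modMonomial_of_le _ hle, coeff_zero]
    · rw [coeff_modMonomial_of_not_le _ hle, coeff_zero]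
      have hdj : d j = 0 := by simpa [Finsupp.single_le_iff, Nat.one_le_iff_ne_zero] using hle
      have := congrArg (coeff (Finsupp.single i 1 + d)) hpq
      rwa [coeff_X_mul, coeff_X_mul', if_neg (by simp [hdj, hij])] at this
  obtain ⟨w, rfl⟩ := hdvd
  refine ⟨w, rfl, ?_⟩
  rw [mul_left_comm, X_mul_cancel_left_iff] at hpq
  exact hpq.symm

theorem IsWeightedHomogeneous.rename [AddCommMonoid M] {w : σ → M} {u : τ → σ}
    {f : MvPolynomial τ R} {n : M} (hf : IsWeightedHomogeneous (w ∘ u) f n) :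
    IsWeightedHomogeneous w (rename u f) n := by
  classical
  intro d hd
  obtain ⟨e, rfl, he⟩ := coeff_rename_ne_zero _ _ _ hd
  rw [← hf he, Finsupp.weight_apply, Finsupp.weight_apply, Finsupp.sum_mapDomain_index]
  · rfl
  · exact fun _ => zero_smul _ _
  · exact fun _ _ _ => add_smul _ _ _

theorem isWeightedHomogeneous_zero_weight [AddCommMonoid M] (f : MvPolynomial σ R) :
    IsWeightedHomogeneous (0 : σ → M) f 0 := by
  intro d _
  simp [Finsupp.weight_apply]

theorem weightedHomogeneousComponent_mem_span [AddCommMonoid M] {w : σ → M}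
    {S : Set (MvPolynomial σ R)} (hS : ∀ x ∈ S, ∃ m, IsWeightedHomogeneous w x m)
    {p : MvPolynomial σ R} (hp : p ∈ Ideal.span S) (m : M) :
    weightedHomogeneousComponent w m p ∈ Ideal.span S := by
  classical
  let := weightedGradedAlgebra R w
  exact weightedHomogeneousComponent_mem_of_mem R w (Ideal.homogeneous_span _ S hS) hp m

theorem IsWeightedHomogeneous.weightedHomogeneousComponent_mul_left [AddCancelCommMonoid M]
    {w : σ → M} {l : MvPolynomial σ R} {m : M} (hl : IsWeightedHomogeneous w l m)
    (p : MvPolynomial σ R) (n : M) :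
    weightedHomogeneousComponent w (m + n) (l * p) = l * weightedHomogeneousComponent w n p := by
  classical
  let := weightedGradedAlgebra R w
  have h := DirectSum.coe_decompose_mul_add_of_left_mem (𝒜 := weightedHomogeneousSubmodule R w)
    (b := p) (j := n) hl
  have hdec : ∀ q k, (DirectSum.decompose (weightedHomogeneousSubmodule R w) q k :
      MvPolynomial σ R) = weightedHomogeneousComponent w k q := decompose'_apply R w
  rwa [hdec, hdec] at h

theorem weightedHomogeneousComponent_zero_eq_aeval (w : σ → ℕ) (p : MvPolynomial σ R) :
    weightedHomogeneousComponent w 0 p = aeval (fun i => if w i = 0 then X i else 0) p := by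
  classical
  induction p using MvPolynomial.induction_on' with
  | add p q hp hq => rw [map_add, map_add, hp, hq]
  | monomial d c =>
    have hweight : Finsupp.weight w d = 0 ↔ ∀ i ∈ d.support, w i = 0 := by
      rw [Finsupp.weight_apply, Finsupp.sum, Finset.sum_eq_zero_iff]
      exact forall₂_congr fun i hi => by simp [Finsupp.mem_support_iff.mp hi]
    rw [weightedHomogeneousComponent_of_mem (isWeightedHomogeneous_monomial w d c rfl),
      aeval_monomial]
    by_cases hw : ∀ i ∈ d.support, w i = 0
    · rw [if_pos (hweight.mpr hw).symm, monomial_eq, algebraMap_eq]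
      exact congrArg _ (Finsupp.prod_congr fun i hi => by rw [if_pos (hw i hi)])
    · push Not at hw
      obtain ⟨i, hi, hwi⟩ := hw
      rw [if_neg fun h => hwi (hweight.mp h.symm i hi), Finsupp.prod, Finset.prod_eq_zero hi (by
        rw [if_neg hwi, zero_pow (Finsupp.mem_support_iff.mp hi)]), mul_zero]

theorem IsHomogeneous.weightedHomogeneousComponent_eq {w w' : σ → ℕ} (hw : w + w' = 1)
    {p : MvPolynomial σ R} {n k l : ℕ} (hp : p.IsHomogeneous n) (hkl : k + l = n) :
    weightedHomogeneousComponent w k p = weightedHomogeneousComponent w' l p := by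
  classical
  ext d
  rw [coeff_weightedHomogeneousComponent, coeff_weightedHomogeneousComponent]
  by_cases hc : coeff d p = 0
  · simp [hc]
  have hd : Finsupp.weight w d + Finsupp.weight w' d = n := by
    rw [← hp hc, ← hw]
    simp only [Finsupp.weight_apply, Pi.add_apply, smul_add, Finsupp.sum_add]
  exact if_congr (by omega) rfl rfl

theorem IsHomogeneous.pos {φ : MvPolynomial σ R} {n : ℕ} (hφ : φ.IsHomogeneous n)
    (h0 : φ ≠ 0) (hc : constantCoeff φ = 0) : 0 < n := by
  refine Nat.pos_of_ne_zero fun hn => h0 ?_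
  subst hn
  rw [totalDegree_eq_zero_iff_eq_C.mp (Nat.le_zero.mp hφ.totalDegree_le), ← constantCoeff_eq, hc,
    C_0]

theorem IsHomogeneous.eq_mul_homogeneousComponent_add_mul_homogeneousComponent
    {D t s h₁ h₂ : MvPolynomial σ R} {n : ℕ} (hD : D.IsHomogeneous (n + 1))
    (ht : t.IsHomogeneous 1) (hs : s.IsHomogeneous 1) (h : D = t * h₁ + s * h₂) :
    D = t * homogeneousComponent n h₁ + s * homogeneousComponent n h₂ := by
  have := congrArg (homogeneousComponent (1 + n)) h
  rwa [add_comm 1 n, homogeneousComponent_eq_self hD, map_add, add_comm n 1,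
    homogeneousComponent, ht.weightedHomogeneousComponent_mul_left,
    hs.weightedHomogeneousComponent_mul_left] at this

end CommSemiring

variable {σ R : Type*} [CommRing R]

theorem isKoszulPair_X_sub_X : IsKoszulPair (X 0 - X 2 : MvPolynomial (Fin 4) R) (X 1 - X 3) := by
  let e : MvPolynomial (Fin 4) R ≃ₐ[R] MvPolynomial (Fin 4) R :=
    AlgEquiv.ofAlgHom (aeval ![X 0 - X 2, X 1 - X 3, X 2, X 3])
      (aeval ![X 0 + X 2, X 1 + X 3, X 2, X 3])
      (algHom_ext fun i => by fin_cases i <;> simp)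
      (algHom_ext fun i => by fin_cases i <;> simp)
  simpa [e] using (isKoszulPair_X (R := R) (show (0 : Fin 4) ≠ 1 by decide)).map e.toMulEquiv

theorem _root_.IsKoszulPair.exists_isHomogeneous_det_sub_mem_span
    {t s D₁ D₂ h₁₁ h₁₂ h₂₁ h₂₂ : MvPolynomial σ R} {n₁ n₂ : ℕ} (hts : IsKoszulPair t s)
    (ht : t.IsHomogeneous 1) (hs : s.IsHomogeneous 1)
    (hD₁ : D₁.IsHomogeneous (n₁ + 1)) (hD₂ : D₂.IsHomogeneous (n₂ + 1))
    (hh₁ : D₁ = t * h₁₁ + s * h₁₂) (hh₂ : D₂ = t * h₂₁ + s * h₂₂) :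
    ∃ k₁₁ k₁₂ k₂₁ k₂₂ : MvPolynomial σ R,
      D₁ = t * k₁₁ + s * k₁₂ ∧ D₂ = t * k₂₁ + s * k₂₂ ∧
      (k₁₁ * k₂₂ - k₁₂ * k₂₁).IsHomogeneous (n₁ + n₂) ∧
      h₁₁ * h₂₂ - h₁₂ * h₂₁ - (k₁₁ * k₂₂ - k₁₂ * k₂₁) ∈ Ideal.span {D₁, D₂} := by
  have hk₁ := hD₁.eq_mul_homogeneousComponent_add_mul_homogeneousComponent ht hs hh₁
  have hk₂ := hD₂.eq_mul_homogeneousComponent_add_mul_homogeneousComponent ht hs hh₂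
  have hc := homogeneousComponent_isHomogeneous (σ := σ) (R := R)
  exact ⟨_, _, _, _, hk₁, hk₂, ((hc n₁ h₁₁).mul (hc n₂ h₂₂)).sub ((hc n₁ h₁₂).mul (hc n₂ h₂₁)),
    hts.det_sub_det_mem_span hh₁ hk₁ hh₂ hk₂⟩

theorem det_specialize_sub_rename_det_mem_span (Z : MvPolynomial σ R →ₐ[R] MvPolynomial σ R)
    {u v : Fin 2 → σ} (hv : v 0 ≠ v 1)
    (hZu : ∀ j, Z (X (u j)) = 0) (hZv : ∀ j, Z (X (v j)) = X (v j))
    {f₁ f₂ a₁₁ a₁₂ a₂₁ a₂₂ : MvPolynomial (Fin 2) R}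
    (hf₁ : f₁ = X 0 * a₁₁ + X 1 * a₁₂) (hf₂ : f₂ = X 0 * a₂₁ + X 1 * a₂₂)
    {h₁₁ h₁₂ h₂₁ h₂₂ : MvPolynomial σ R}
    (hh₁ : rename u f₁ - rename v f₁ = (X (u 0) - X (v 0)) * h₁₁ + (X (u 1) - X (v 1)) * h₁₂)
    (hh₂ : rename u f₂ - rename v f₂ = (X (u 0) - X (v 0)) * h₂₁ + (X (u 1) - X (v 1)) * h₂₂) :
    Z (h₁₁ * h₂₂ - h₁₂ * h₂₁) - rename v (a₁₁ * a₂₂ - a₁₂ * a₂₁) ∈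
      Ideal.span {rename v f₁, rename v f₂} := by
  have hZv' (p : MvPolynomial (Fin 2) R) : Z (rename v p) = rename v p :=
    AlgHom.congr_fun (φ₁ := Z.comp (rename v)) (algHom_ext fun j => by simp [hZv]) p
  have specialize {f a b : MvPolynomial (Fin 2) R} {h h' : MvPolynomial σ R}
      (hf : f = X 0 * a + X 1 * b)
      (hh : rename u f - rename v f = (X (u 0) - X (v 0)) * h + (X (u 1) - X (v 1)) * h') :
      rename v f = X (v 0) * Z h + X (v 1) * Z h' := by
    subst hf
    have hZ := congrArg Z hh
    simp only [map_sub, map_add, map_mul, rename_X, hZu, hZv, hZv', zero_mul, zero_add] at hZ ⊢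
    linear_combination -hZ
  have sylvester {f a b : MvPolynomial (Fin 2) R} (hf : f = X 0 * a + X 1 * b) :
      rename v f = X (v 0) * rename v a + X (v 1) * rename v b := by
    simp [hf]
  simpa only [map_sub, map_mul] using (isKoszulPair_X hv).det_sub_det_mem_span
    (specialize hf₁ hh₁) (sylvester hf₁) (specialize hf₂ hh₂) (sylvester hf₂)

theorem weightedHomogeneousComponent_mem_span_rename {f₁ f₂ : MvPolynomial (Fin 2) R}
    {n₁ n₂ : ℕ} (hf₁ : f₁.IsHomogeneous n₁) (hf₂ : f₂.IsHomogeneous n₂)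
    {p : MvPolynomial (Fin 4) R}
    (hp : p ∈
      Ideal.span {rename ![0, 1] f₁, rename ![0, 1] f₂, rename ![2, 3] f₁, rename ![2, 3] f₂})
    (m : ℕ) :
    weightedHomogeneousComponent ![1, 1, 0, 0] m p ∈
      Ideal.span {rename ![0, 1] f₁, rename ![0, 1] f₂, rename ![2, 3] f₁, rename ![2, 3] f₂} := by
  have hX : (![1, 1, 0, 0] : Fin 4 → ℕ) ∘ ![0, 1] = 1 := by ext i; fin_cases i <;> rfl
  have hY : (![1, 1, 0, 0] : Fin 4 → ℕ) ∘ ![2, 3] = 0 := by ext i; fin_cases i <;> rfl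
  refine weightedHomogeneousComponent_mem_span ?_ hp m
  rintro x (rfl | rfl | rfl | rfl)
  exacts [⟨_, IsWeightedHomogeneous.rename (by rw [hX]; exact hf₁)⟩,
    ⟨_, IsWeightedHomogeneous.rename (by rw [hX]; exact hf₂)⟩,
    ⟨0, IsWeightedHomogeneous.rename (by rw [hY]; exact isWeightedHomogeneous_zero_weight f₁)⟩,
    ⟨0, IsWeightedHomogeneous.rename (by rw [hY]; exact isWeightedHomogeneous_zero_weight f₂)⟩]

theorem weightedHomogeneousComponent_zero_det_sub_rename_det_mem_span
    {f₁ f₂ a₁₁ a₁₂ a₂₁ a₂₂ : MvPolynomial (Fin 2) R}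
    (hf₁ : f₁ = X 0 * a₁₁ + X 1 * a₁₂) (hf₂ : f₂ = X 0 * a₂₁ + X 1 * a₂₂)
    {h₁₁ h₁₂ h₂₁ h₂₂ : MvPolynomial (Fin 4) R}
    (hh₁ : rename ![0, 1] f₁ - rename ![2, 3] f₁ = (X 0 - X 2) * h₁₁ + (X 1 - X 3) * h₁₂)
    (hh₂ : rename ![0, 1] f₂ - rename ![2, 3] f₂ = (X 0 - X 2) * h₂₁ + (X 1 - X 3) * h₂₂) :
    weightedHomogeneousComponent ![1, 1, 0, 0] 0 (h₁₁ * h₂₂ - h₁₂ * h₂₁) -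
      rename ![2, 3] (a₁₁ * a₂₂ - a₁₂ * a₂₁) ∈
        Ideal.span {rename ![2, 3] f₁, rename ![2, 3] f₂} := by
  rw [weightedHomogeneousComponent_zero_eq_aeval]
  exact det_specialize_sub_rename_det_mem_span _ (u := ![0, 1]) (v := ![2, 3]) (by decide)
    (by intro j; fin_cases j <;> simp) (by intro j; fin_cases j <;> simp) hf₁ hf₂ hh₁ hh₂

theorem weightedHomogeneousComponent_top_det_sub_rename_det_mem_span
    {f₁ f₂ a₁₁ a₁₂ a₂₁ a₂₂ : MvPolynomial (Fin 2) R} {n₁ n₂ : ℕ}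
    (hf₁ : f₁.IsHomogeneous (n₁ + 1)) (hf₂ : f₂.IsHomogeneous (n₂ + 1))
    (hfa₁ : f₁ = X 0 * a₁₁ + X 1 * a₁₂) (hfa₂ : f₂ = X 0 * a₂₁ + X 1 * a₂₂)
    {h₁₁ h₁₂ h₂₁ h₂₂ : MvPolynomial (Fin 4) R}
    (hh₁ : rename ![0, 1] f₁ - rename ![2, 3] f₁ = (X 0 - X 2) * h₁₁ + (X 1 - X 3) * h₁₂)
    (hh₂ : rename ![0, 1] f₂ - rename ![2, 3] f₂ = (X 0 - X 2) * h₂₁ + (X 1 - X 3) * h₂₂) :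
    weightedHomogeneousComponent ![1, 1, 0, 0] (n₁ + n₂) (h₁₁ * h₂₂ - h₁₂ * h₂₁) -
      rename ![0, 1] (a₁₁ * a₂₂ - a₁₂ * a₂₁) ∈
        Ideal.span
          {rename ![0, 1] f₁, rename ![0, 1] f₂, rename ![2, 3] f₁, rename ![2, 3] f₂} := by
  set I := Ideal.span {rename ![(0 : Fin 4), 1] f₁, rename ![0, 1] f₂, rename ![2, 3] f₁,
    rename ![2, 3] f₂}
  have hD {f : MvPolynomial (Fin 2) R} {n : ℕ} (hf : f.IsHomogeneous n) :
      (rename ![(0 : Fin 4), 1] f - rename ![2, 3] f).IsHomogeneous n :=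
    hf.rename_isHomogeneous.sub hf.rename_isHomogeneous
  have hlin (i j : Fin 4) : (X i - X j : MvPolynomial (Fin 4) R).IsHomogeneous 1 :=
    (isHomogeneous_X R i).sub (isHomogeneous_X R j)
  obtain ⟨k₁₁, k₁₂, k₂₁, k₂₂, hk₁, hk₂, hδ, hdet⟩ :=
    isKoszulPair_X_sub_X.exists_isHomogeneous_det_sub_mem_span (hlin 0 2) (hlin 1 3) (hD hf₁)
      (hD hf₂) hh₁ hh₂
  have hdetI : h₁₁ * h₂₂ - h₁₂ * h₂₁ - (k₁₁ * k₂₂ - k₁₂ * k₂₁) ∈ I := by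
    refine Ideal.span_le.mpr ?_ hdet
    rintro x (rfl | rfl) <;>
      exact I.sub_mem (Ideal.subset_span (by simp)) (Ideal.subset_span (by simp))
  have hspec := det_specialize_sub_rename_det_mem_span
    (aeval fun i => if (![0, 0, 1, 1] : Fin 4 → ℕ) i = 0 then X i else 0) (u := ![2, 3])
    (v := ![0, 1]) (by decide) (by intro j; fin_cases j <;> simp) (by intro j; fin_cases j <;> simp)
    hfa₁ hfa₂ (h₁₁ := k₁₁) (h₁₂ := k₁₂) (h₂₁ := k₂₁) (h₂₂ := k₂₂)
    (by simp only [Matrix.cons_val_zero, Matrix.cons_val_one]; linear_combination -hk₁)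
    (by simp only [Matrix.cons_val_zero, Matrix.cons_val_one]; linear_combination -hk₂)
  -- on `k`, homogeneous of degree `n₁ + n₂`, `X`-weight `n₁ + n₂` is the same as `Y`-weight `0`
  rw [← weightedHomogeneousComponent_zero_eq_aeval, ← hδ.weightedHomogeneousComponent_eq
    (w := ![1, 1, 0, 0]) (by ext i; fin_cases i <;> rfl) (add_zero _)] at hspec
  rw [← sub_add_sub_cancel _ (weightedHomogeneousComponent ![1, 1, 0, 0] (n₁ + n₂)
    (k₁₁ * k₂₂ - k₁₂ * k₂₁)), ← map_sub]
  exact I.add_mem (weightedHomogeneousComponent_mem_span_rename hf₁ hf₂ hdetI _)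
    (Ideal.span_mono (by simp [Set.insert_subset_iff]) hspec)

end MvPolynomial

theorem RingTheory.Sequence.IsRegular.ne_zero_of_mem {R M : Type*} [CommRing R] [AddCommGroup M]
    [Module R M] {rs : List R} (h : IsRegular M rs) {r : R} (hr : r ∈ rs) : r ≠ 0 := by
  induction rs generalizing M with
  | nil => simp at hr
  | cons r' rs ih =>
    obtain ⟨hr', htail⟩ := (isRegular_cons_iff M r' rs).mp h
    rcases List.mem_cons.mp hr with rfl | hr
    · have := h.nontrivial
      rintro rfl
      exact IsSMulRegular.not_zero hr'
    · exact ih htail hr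

theorem stmt5 {A : Type*} [CommRing A] (d1 d2 : ℕ)
    (f1 f2 : MvPolynomial (Fin 2) A)
    (hf1 : f1.IsHomogeneous d1) (hf2 : f2.IsHomogeneous d2)
    (hreg : RingTheory.Sequence.IsRegular (MvPolynomial (Fin 2) A) [f1, f2])
    (F1X F2X F1Y F2Y : MvPolynomial (Fin 4) A)
    (hF1X : F1X = rename ![0, 1] f1) (hF2X : F2X = rename ![0, 1] f2)
    (hF1Y : F1Y = rename ![2, 3] f1) (hF2Y : F2Y = rename ![2, 3] f2)
    -- a decomposition defining the Morley form
    (h11 h12 h21 h22 : MvPolynomial (Fin 4) A)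
    (hh1 : F1X - F1Y = (X 0 - X 2) * h11 + (X 1 - X 3) * h12)
    (hh2 : F2X - F2Y = (X 0 - X 2) * h21 + (X 1 - X 3) * h22)
    -- a decomposition defining the Sylvester form `sylv_{(0,0)}(f1,f2)`
    (a11 a12 a21 a22 : MvPolynomial (Fin 2) A)
    (hfa1 : f1 = X 0 * a11 + X 1 * a12)
    (hfa2 : f2 = X 0 * a21 + X 1 * a22) :
    (weightedHomogeneousComponent ![1, 1, 0, 0] (d1 + d2 - 2) (h11 * h22 - h12 * h21) -
        rename ![0, 1] (a11 * a22 - a12 * a21) ∈ Ideal.span {F1X, F2X, F1Y, F2Y}) ∧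
    (weightedHomogeneousComponent ![1, 1, 0, 0] 0 (h11 * h22 - h12 * h21) -
        rename ![2, 3] (a11 * a22 - a12 * a21) ∈ Ideal.span {F1X, F2X, F1Y, F2Y}) := by
  subst hF1X hF2X hF1Y hF2Y
  have hc {f a b : MvPolynomial (Fin 2) A} (hf : f = X 0 * a + X 1 * b) :
      constantCoeff f = 0 := by
    simp [hf]
  obtain ⟨e1, rfl⟩ := Nat.exists_eq_add_one_of_ne_zero
    (hf1.pos (hreg.ne_zero_of_mem (by simp)) (hc hfa1)).ne'
  obtain ⟨e2, rfl⟩ := Nat.exists_eq_add_one_of_ne_zero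
    (hf2.pos (hreg.ne_zero_of_mem (by simp)) (hc hfa2)).ne'
  refine ⟨?_, Ideal.span_mono ?_
    (weightedHomogeneousComponent_zero_det_sub_rename_det_mem_span hfa1 hfa2 hh1 hh2)⟩
  · rw [show e1 + 1 + (e2 + 1) - 2 = e1 + e2 by omega]
    exact weightedHomogeneousComponent_top_det_sub_rename_det_mem_span hf1 hf2 hfa1 hfa2 hh1 hh2
  · simp [Set.insert_subset_iff]
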